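/- Let a > 0, n = 1, and let W̃ = (w̃_{ij}) be an N×N matrix with nonnegative entries and positive diagonal. Define v* ∈ ℝ^N by v*_i = (Σ_{j=1}^i w̃_{ij} − (1/2)·w̃_{ii}) / (Σ_{j=1}^N w̃_{ij}) for i = 1, …, N, and assume the entries v*_1 < v*_2 < … < v*_N are strictly increasing and lie in (0,1). Then v* is a critical point of the energy E(·,W̃), i.e. it satisfies the steady-state equations 0 = Σ_{j<i} w̃_{ij}·(Φ_{a,1}(v*_j − v*_i) − Φ_{a,1}(v*_j + v*_i)) + Σ_{j>i} w̃_{ij}·(Φ_{a,1}(v*_j − v*_i) − Φ_{a,1}(v*_j + v*_i)) − w̃_{ii}·Φ_{a,1}(2v*_i) for all i = 1, …, N. -/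

import Mathlib

open scoped Classical

/-- Flux with `n = 1`: `Φ_{a,1}(s) = a·(s−1)` for `s ≥ 0`, extended by
`Φ_{a,1}(s) = a·(s+1)` for `s < 0`. -/
noncomputable def flux1 (a : ℝ) (s : ℝ) : ℝ :=
  if 0 ≤ s then a * (s - 1) else a * (s + 1)

/-!
For `0 < v_j` the argument `v_j + v_i` of the second flux is positive, and `v_j - v_i` has the sign
of `j - i` by monotonicity, so every term of the steady-state equation is affine in `v_i`: the
equation collapses to `v_i · Σ_j w_ij = Σ_{j<i} w_ij + w_ii / 2`, which is the definition of `v*`.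
-/

open Finset

lemma flux1_of_nonneg {a s : ℝ} (hs : 0 ≤ s) : flux1 a s = a * (s - 1) := if_pos hs

lemma flux1_of_neg {a s : ℝ} (hs : s < 0) : flux1 a s = a * (s + 1) := if_neg hs.not_ge

lemma flux1_sub_sub_flux1_add_of_lt {a u v : ℝ} (huv : u < v) (h : 0 ≤ u + v) :
    flux1 a (u - v) - flux1 a (u + v) = a * (2 - 2 * v) := by
  rw [flux1_of_neg (by linarith), flux1_of_nonneg h]
  ring

lemma flux1_sub_sub_flux1_add_of_le {a u v : ℝ} (hvu : v ≤ u) (h : 0 ≤ u + v) :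
    flux1 a (u - v) - flux1 a (u + v) = -(2 * a * v) := by
  rw [flux1_of_nonneg (by linarith), flux1_of_nonneg h]
  ring

section OrderedSums

variable {ι M : Type*} [Fintype ι] [LinearOrder ι] [AddCommMonoid M]

lemma sum_filter_le_eq_sum_filter_lt_add (f : ι → M) (i : ι) :
    ∑ j ∈ univ.filter (· ≤ i), f j = ∑ j ∈ univ.filter (· < i), f j + f i := by
  have : univ.filter (· ≤ i) = insert i (univ.filter (· < i)) := by
    ext j
    simp [le_iff_lt_or_eq, or_comm]
  rw [this, sum_insert (by simp), add_comm]

lemma sum_eq_sum_filter_lt_add_add_sum_filter_gt (f : ι → M) (i : ι) :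
    ∑ j, f j = ∑ j ∈ univ.filter (· < i), f j + f i + ∑ j ∈ univ.filter (i < ·), f j := by
  rw [← sum_filter_le_eq_sum_filter_lt_add, ← sum_filter_add_sum_filter_not univ (· ≤ i)]
  simp only [not_le]

end OrderedSums

theorem stmt11 (a : ℝ) (N : ℕ)
    (W : Matrix (Fin N) (Fin N) ℝ)
    (vstar : Fin N → ℝ)
    (hdef : ∀ i, vstar i =
      ((∑ j ∈ Finset.univ.filter (fun j : Fin N => (j : ℕ) ≤ (i : ℕ)), W i j) - W i i / 2) /
        (∑ j, W i j))
    (hmono : StrictMono vstar)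
    (hrange : ∀ i, vstar i ∈ Set.Ioo (0 : ℝ) 1) :
    ∀ i : Fin N, (0 : ℝ) =
      (∑ j ∈ Finset.univ.filter (fun j : Fin N => (j : ℕ) < (i : ℕ)),
        W i j * (flux1 a (vstar j - vstar i) - flux1 a (vstar j + vstar i))) +
      (∑ j ∈ Finset.univ.filter (fun j : Fin N => (i : ℕ) < (j : ℕ)),
        W i j * (flux1 a (vstar j - vstar i) - flux1 a (vstar j + vstar i))) -
      W i i * flux1 a (2 * vstar i) := by
  intro i
  simp only [Fin.val_fin_le, Fin.val_fin_lt] at hdef ⊢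
  have hpos j : 0 < vstar j := (hrange j).1
  -- `vstar i ≠ 0` rules out the junk value `x / 0 = 0`.
  have hS : ∑ j, W i j ≠ 0 := fun h => (hpos i).ne' (by rw [hdef i, h, div_zero])
  have hv : vstar i * ∑ j, W i j = ∑ j ∈ univ.filter (· < i), W i j + W i i / 2 := by
    rw [hdef i, div_mul_cancel₀ _ hS, sum_filter_le_eq_sum_filter_lt_add]
    ring
  rw [sum_eq_sum_filter_lt_add_add_sum_filter_gt _ i] at hv
  have hlower : ∀ j ∈ univ.filter (· < i),
      W i j * (flux1 a (vstar j - vstar i) - flux1 a (vstar j + vstar i)) =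
        W i j * (a * (2 - 2 * vstar i)) := fun j hj => by
    rw [flux1_sub_sub_flux1_add_of_lt (hmono (mem_filter.1 hj).2) (by linarith [hpos i, hpos j])]
  have hupper : ∀ j ∈ univ.filter (i < ·),
      W i j * (flux1 a (vstar j - vstar i) - flux1 a (vstar j + vstar i)) =
        W i j * -(2 * a * vstar i) := fun j hj => by
    rw [flux1_sub_sub_flux1_add_of_le (hmono (mem_filter.1 hj).2).le (by linarith [hpos i, hpos j])]
  rw [sum_congr rfl hlower, sum_congr rfl hupper, ← sum_mul, ← sum_mul,
    flux1_of_nonneg (by linarith [hpos i])]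
  linear_combination 2 * a * hv
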